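/- Soundness of rewriting for graded equational theories: if t ↔*_{R,ε} s (t and s are (R,ε)-convertible) in an (Ω,Φ)-term rewriting system R, then ε ⊩ t =_R s is derivable in the graded equational theory generated by R. -/

import Mathlib

/-! Graded terms over a `Φ`-graded signature: each function symbol carries a modal arity,
a list of quantale endomorphisms (one per argument). -/

/-- A graded signature: function symbols together with their modal arities,
lists of maps `Ω → Ω` (intended to be quantale endomorphisms, CBEs). -/
structure GradedSig (Ω : Type*) where
  Sym : Type
  arity : Sym → List (Ω → Ω)

/-- First-order terms over a graded signature, with variables indexed by `ℕ`. -/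
inductive GTerm {Ω : Type*} (F : GradedSig Ω) : Type
  | var : ℕ → GTerm F
  | app : (f : F.Sym) → (Fin (F.arity f).length → GTerm F) → GTerm F

namespace GTerm

variable {Ω : Type*} {F : GradedSig Ω}

/-- The subterm of `t` at position `p` (`none` if `p` is not a position of `t`). -/
def subtermAt : GTerm F → List ℕ → Option (GTerm F)
  | t, [] => some t
  | var _, _ :: _ => none
  | app f args, i :: p =>
      if h : i < (F.arity f).length then subtermAt (args ⟨i, h⟩) p else none

/-- `replaceAt t p u` is `t[u]_p`, the replacement of the subterm of `t` at `p` by `u`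
(returning `t` unchanged on the illegal cases). -/
def replaceAt : GTerm F → List ℕ → GTerm F → GTerm F
  | _, [], u => u
  | var v, _ :: _, _ => var v
  | app f args, i :: p, u =>
      app f (fun j => if (j : ℕ) = i then replaceAt (args j) p u else args j)

/-- The grade `∂_p(t)` of position `p` in term `t`: the composition of the modal grades
along `p`, with `∂_λ(t) = id` and `∂_{i.p}(f(t₁,…,tₙ)) = φᵢ ∘ ∂_p(tᵢ)`. -/
def gradeAt : GTerm F → List ℕ → (Ω → Ω)
  | _, [] => id
  | var _, _ :: _ => id
  | app f args, i :: p =>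
      if h : i < (F.arity f).length then
        ((F.arity f).get ⟨i, h⟩) ∘ gradeAt (args ⟨i, h⟩) p
      else id

/-- Application of a substitution `σ : ℕ → GTerm F` to a term. -/
def subst (σ : ℕ → GTerm F) : GTerm F → GTerm F
  | var v => σ v
  | app f args => app f (fun j => subst σ (args j))

/-- The set of variables of a term. -/
def vars : GTerm F → Set ℕ
  | var v => {v}
  | app _ args => ⋃ j, vars (args j)

/-- The set of positions of a term. -/
def Pos (t : GTerm F) : Set (List ℕ) := {p | (subtermAt t p).isSome}

/-- The set of non-variable (function symbol) positions of a term. -/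
def FunPos (t : GTerm F) : Set (List ℕ) :=
  {p | ∃ f args, subtermAt t p = some (app f args)}

/-- A term is linear if no variable occurs at two distinct positions. -/
def Linear (t : GTerm F) : Prop :=
  ∀ v p q, subtermAt t p = some (var v) → subtermAt t q = some (var v) → p = q

end GTerm

/-- A quantale endomorphism (change-of-base endofunctor, CBE): a monotone map preserving
the unit, the tensor, and arbitrary joins. -/
def IsCBE {Ω : Type*} [Monoid Ω] [CompleteLattice Ω] (φ : Ω → Ω) : Prop :=
  Monotone φ ∧ φ 1 = 1 ∧ (∀ a b : Ω, φ (a * b) = φ a * φ b) ∧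
    ∀ s : Set Ω, φ (sSup s) = sSup (φ '' s)

/-- A `Φ`-graded signature is one whose modal arities consist of CBEs. -/
def GradedSig.IsCBESig {Ω : Type*} [Monoid Ω] [CompleteLattice Ω] (F : GradedSig Ω) : Prop :=
  ∀ f : F.Sym, ∀ φ ∈ F.arity f, IsCBE φ

/-- A (commutative unital) quantale is Lawverean if it is integral (`κ = ⊤`),
cointegral (`ε ⊗ δ = ⊥` implies `ε = ⊥` or `δ = ⊥`), and nontrivial (`κ ≠ ⊥`). -/
def Lawverean (Ω : Type*) [CommMonoid Ω] [CompleteLattice Ω] : Prop :=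
  (1 : Ω) = ⊤ ∧ (∀ a b : Ω, a * b = ⊥ → a = ⊥ ∨ b = ⊥) ∧ (1 : Ω) ≠ ⊥
/-- The graded quantitative equational theory `=_E` generated by a set `E` of
`Ω`-equalities `(t, ε, s)`, closed under the rules (Ax), (Refl), (Sym), (Trans),
(Ampl), (Subst), (Ord), and (Join). -/
inductive EqDeriv {Ω : Type*} [CommMonoid Ω] [CompleteLattice Ω] (F : GradedSig Ω)
    (E : Set (GTerm F × Ω × GTerm F)) : Ω → GTerm F → GTerm F → Prop
  | ax {t ε s} : (t, ε, s) ∈ E → EqDeriv F E ε t s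
  | refl (t) : EqDeriv F E 1 t t
  | symm {ε t s} : EqDeriv F E ε t s → EqDeriv F E ε s t
  | trans {ε δ t s r} : EqDeriv F E ε t s → EqDeriv F E δ s r → EqDeriv F E (ε * δ) t r
  | ampl (f : F.Sym) (ts ss : Fin (F.arity f).length → GTerm F)
      (εs : Fin (F.arity f).length → Ω) :
      (∀ j, EqDeriv F E (εs j) (ts j) (ss j)) →
      EqDeriv F E (List.ofFn (fun j => (F.arity f).get j (εs j))).prod
        (GTerm.app f ts) (GTerm.app f ss)
  | subst {ε t s} (σ : ℕ → GTerm F) :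
      EqDeriv F E ε t s → EqDeriv F E ε (t.subst σ) (s.subst σ)
  | ord {ε δ t s} : EqDeriv F E ε t s → δ ≤ ε → EqDeriv F E δ t s
  | join {ε δ t s} : EqDeriv F E ε t s → EqDeriv F E δ t s → EqDeriv F E (ε ⊔ δ) t s
/-- An `(Ω,Φ)`-term rewriting system: every rule `ε ⊩ l ↦ r` has a non-variable
left-hand side and `Var(r) ⊆ Var(l)`. -/
def IsTRS {Ω : Type*} {F : GradedSig Ω} (R : Set (GTerm F × Ω × GTerm F)) : Prop :=
  ∀ l ε r, (l, ε, r) ∈ R → (∀ v, l ≠ GTerm.var v) ∧ GTerm.vars r ⊆ GTerm.vars l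

/-- One-step graded rewriting: from a rule `δ ⊩ l ↦ r` infer
`∂_p(t)(δ) ⊩ t = t[lσ]_p → t[rσ]_p`. -/
def Rew {Ω : Type*} {F : GradedSig Ω} (R : Set (GTerm F × Ω × GTerm F))
    (ε : Ω) (t s : GTerm F) : Prop :=
  ∃ (l : GTerm F) (δ : Ω) (r : GTerm F) (σ : ℕ → GTerm F) (p : List ℕ), (l, δ, r) ∈ R ∧
    GTerm.subtermAt t p = some (GTerm.subst σ l) ∧
    s = GTerm.replaceAt t p (GTerm.subst σ r) ∧
    ε = GTerm.gradeAt t p δ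

/-- Graded reflexive-transitive closure of the symmetric rewrite relation
`↔_R = →_R ∪ ←_R`, combining degrees of consecutive steps by `⊗`
(with the unit `κ` for zero steps): graded convertibility `t ↔*_{R,ε} s`. -/
inductive ConvStar {Ω : Type*} [Monoid Ω] {F : GradedSig Ω}
    (R : Set (GTerm F × Ω × GTerm F)) : Ω → GTerm F → GTerm F → Prop
  | refl (t) : ConvStar R 1 t t
  | step {ε δ t u s} : (Rew R ε t u ∨ Rew R ε u t) → ConvStar R δ u s →
      ConvStar R (ε * δ) t s

/-- Graded multi-step rewriting `t →*_{R,ε} s`, combining degrees by `⊗`. -/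
inductive RewStar {Ω : Type*} [Monoid Ω] {F : GradedSig Ω}
    (R : Set (GTerm F × Ω × GTerm F)) : Ω → GTerm F → GTerm F → Prop
  | refl (t) : RewStar R 1 t t
  | step {ε δ t u s} : Rew R ε t u → RewStar R δ u s → RewStar R (ε * δ) t s

/-! A single rewrite step is an instance of the rule `(l, δ, r)` under a substitution, placed in
a one-hole context; (Ax) and (Subst) derive the instance, and (Ampl) lifts it through each layer
of the context. Since the other arguments are related by (Refl) at degree `κ` and the modal
arities preserve `κ`, the degree picked up at each layer is exactly `φᵢ` of the inner degree,
which yields `∂_p(t)(δ)`. (Sym) and (Trans) then handle conversions. -/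

def GradedSig.UnitPreserving {Ω : Type*} [One Ω] (F : GradedSig Ω) : Prop :=
  ∀ f : F.Sym, ∀ φ ∈ F.arity f, φ 1 = 1

theorem GradedSig.IsCBESig.unitPreserving {Ω : Type*} [Monoid Ω] [CompleteLattice Ω]
    {F : GradedSig Ω} (hF : F.IsCBESig) : F.UnitPreserving :=
  fun f φ hφ => (hF f φ hφ).2.1

namespace EqDeriv

variable {Ω : Type*} [CommMonoid Ω] [CompleteLattice Ω] {F : GradedSig Ω}
  {E : Set (GTerm F × Ω × GTerm F)}

theorem app_congr_single (hunit : F.UnitPreserving) (f : F.Sym)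
    (args : Fin (F.arity f).length → GTerm F) (i : Fin (F.arity f).length) {δ : Ω}
    {u : GTerm F} (h : EqDeriv F E δ (args i) u) :
    EqDeriv F E ((F.arity f).get i δ) (GTerm.app f args)
      (GTerm.app f fun j => if j = i then u else args j) := by
  have hdeg : (List.ofFn fun j => (F.arity f).get j (if j = i then δ else 1)).prod =
      (F.arity f).get i δ := by
    rw [List.prod_ofFn, Fintype.prod_eq_single i fun j hj => by
      simp [hj, hunit f _ (List.get_mem _ _)]]
    simp
  rw [← hdeg]
  refine ampl f _ _ _ fun j => ?_
  by_cases hj : j = i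
  · subst hj; simpa using h
  · simpa [hj] using refl (args j)

theorem replaceAt (hunit : F.UnitPreserving) (p : List ℕ) {t u u' : GTerm F}
    {δ : Ω} (hu : t.subtermAt p = some u) (h : EqDeriv F E δ u u') :
    EqDeriv F E (t.gradeAt p δ) t (t.replaceAt p u') := by
  induction p generalizing t with
  | nil =>
    obtain rfl : t = u := by simpa [GTerm.subtermAt] using hu
    simpa [GTerm.gradeAt, GTerm.replaceAt] using h
  | cons i q ih =>
    cases t with
    | var v => simp [GTerm.subtermAt] at hu
    | app f args =>
      by_cases hi : i < (F.arity f).length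
      · simp only [GTerm.subtermAt, hi, dite_true] at hu
        have hhole : (fun j : Fin _ => if (j : ℕ) = i then (args j).replaceAt q u' else args j) =
            fun j => if j = ⟨i, hi⟩ then (args ⟨i, hi⟩).replaceAt q u' else args j := by
          funext j
          by_cases hj : (j : ℕ) = i
          · obtain rfl : j = ⟨i, hi⟩ := Fin.ext hj
            simp
          · simp [hj, Fin.ext_iff]
        simpa [GTerm.gradeAt, GTerm.replaceAt, hi, hhole] using
          app_congr_single hunit f args ⟨i, hi⟩ (ih hu)
      · simp [GTerm.subtermAt, hi] at hu

theorem of_rew (hunit : F.UnitPreserving) {ε : Ω} {t s : GTerm F}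
    (h : Rew E ε t s) : EqDeriv F E ε t s := by
  obtain ⟨l, δ, r, σ, p, hrule, hsub, rfl, rfl⟩ := h
  exact replaceAt hunit p hsub (subst σ (ax hrule))

theorem of_convStar (hunit : F.UnitPreserving) {ε : Ω} {t s : GTerm F}
    (h : ConvStar E ε t s) : EqDeriv F E ε t s := by
  induction h with
  | refl t => exact refl t
  | step hstep _ ih =>
    refine trans ?_ ih
    rcases hstep with hfwd | hbwd
    · exact of_rew hunit hfwd
    · exact symm (of_rew hunit hbwd)

end EqDeriv

theorem graded_rewriting_sound_general {Ω : Type*} [CommMonoid Ω] [CompleteLattice Ω]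
    {F : GradedSig Ω} (hF : F.IsCBESig)
    (R : Set (GTerm F × Ω × GTerm F)) {ε : Ω} {t s : GTerm F}
    (h : ConvStar R ε t s) : EqDeriv F R ε t s :=
  EqDeriv.of_convStar hF.unitPreserving h

/-- Soundness of rewriting for graded equational theories: if `t ↔*_{R,ε} s` in an
`(Ω,Φ)`-TRS `R`, then `ε ⊩ t =_R s` is derivable in the graded equational theory
generated by `R`. -/
theorem graded_rewriting_sound {Ω : Type*} [CommMonoid Ω] [CompleteLattice Ω] [IsQuantale Ω]
    (hΩ : Lawverean Ω) {F : GradedSig Ω} (hF : F.IsCBESig)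
    (R : Set (GTerm F × Ω × GTerm F)) (hR : IsTRS R) {ε : Ω} {t s : GTerm F}
    (h : ConvStar R ε t s) : EqDeriv F R ε t s :=
  graded_rewriting_sound_general hF R h
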